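/- Let a, b, c be real numbers with c ≠ 0. For every n ∈ ℕ, the matrices Λₙ(D₁) = [[-2n, -2abn, 0],[0, -2n+2, 0],[0, 0, -2n]] and Λₙ(D₂) = [[2+4/c², 0, -2a(n+1)/c],[0, 2+4/c², 0],[0, 0, -2n]] satisfy Λₙ(D₁)·Λₙ(D₂) = Λₙ(D₂)² + (2(c²+2)/c²)·(Λₙ(D₁) - Λₙ(D₂)). -/

import Mathlib

/-!
With `k = 2(c² + 2)/c² = 2 + 4/c²` the relation is equivalent to `(Λ₁ - Λ₂)(Λ₂ - k) = 0`.
Since `k` is the first two diagonal entries of `Λ₂`, the matrix `Λ₂ - k` has rank one: it is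
`u eᵀ` with `e` the last basis vector, and `u` lies in the kernel of `Λ₁ - Λ₂`.
-/

open Matrix

/-- Eigenvalue matrix Λₙ(D₁). -/
noncomputable def Lambda1 (a b : ℝ) (n : ℕ) : Matrix (Fin 3) (Fin 3) ℝ :=
  !![-2 * (n : ℝ), -2 * a * b * (n : ℝ), 0;
     0, -2 * (n : ℝ) + 2, 0;
     0, 0, -2 * (n : ℝ)]

/-- Eigenvalue matrix Λₙ(D₂). -/
noncomputable def Lambda2 (a c : ℝ) (n : ℕ) : Matrix (Fin 3) (Fin 3) ℝ :=
  !![2 + 4 / c ^ 2, 0, -2 * a * ((n : ℝ) + 1) / c;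
     0, 2 + 4 / c ^ 2, 0;
     0, 0, -2 * (n : ℝ)]

theorem mul_eq_sq_add_smul_sub_iff {R A : Type*} [CommRing R] [Ring A] [Algebra R A]
    (X Y : A) (k : R) :
    X * Y = Y ^ 2 + k • (X - Y) ↔ (X - Y) * (Y - k • 1) = 0 := by
  have h : (X - Y) * (Y - k • 1) = X * Y - (Y ^ 2 + k • (X - Y)) := by
    rw [mul_sub, mul_smul_one, sq, sub_mul]
    abel
  rw [h, sub_eq_zero]

noncomputable def lambda2ShiftedColumn (a c : ℝ) (n : ℕ) : Fin 3 → ℝ :=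
  ![-2 * a * ((n : ℝ) + 1) / c, 0, -2 * (n : ℝ) - (2 + 4 / c ^ 2)]

theorem Lambda2_sub_smul_one {a c : ℝ} (hc : c ≠ 0) (n : ℕ) :
    Lambda2 a c n - (2 * (c ^ 2 + 2) / c ^ 2) • 1
      = vecMulVec (lambda2ShiftedColumn a c n) ![0, 0, 1] := by
  have hk : 2 * (c ^ 2 + 2) / c ^ 2 = 2 + 4 / c ^ 2 := by
    field_simp
    ring
  rw [hk, Lambda2, lambda2ShiftedColumn]
  ext i j
  fin_cases i <;> fin_cases j <;> simp [vecMulVec_apply]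

theorem Lambda1_sub_Lambda2_mulVec_lambda2ShiftedColumn (a b c : ℝ) (n : ℕ) :
    (Lambda1 a b n - Lambda2 a c n) *ᵥ lambda2ShiftedColumn a c n = 0 := by
  ext i
  fin_cases i <;>
    simp [Lambda1, Lambda2, lambda2ShiftedColumn, mulVec, dotProduct, Fin.sum_univ_three]
  ring

/-- the relation Λₙ(D₁)Λₙ(D₂) = Λₙ(D₂)² + (2(c²+2)/c²)(Λₙ(D₁) - Λₙ(D₂)). -/
theorem eigenvalues_relation (a b c : ℝ) (hc : c ≠ 0) (n : ℕ) :
    Lambda1 a b n * Lambda2 a c n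
      = Lambda2 a c n ^ 2
        + (2 * (c ^ 2 + 2) / c ^ 2) • (Lambda1 a b n - Lambda2 a c n) := by
  rw [mul_eq_sq_add_smul_sub_iff, Lambda2_sub_smul_one hc, mul_vecMulVec,
    Lambda1_sub_Lambda2_mulVec_lambda2ShiftedColumn, zero_vecMulVec]
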